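/- arXiv:1702.01317 — 2 statements merged into one kernel-verified Lean document; each statement's English description precedes it below -/
import Mathlib

section
/- Let δ ∈ (0,1] and a = (2+δ)/(1+δ). Let P and Q be mutually absolutely continuous probability measures on a measurable space such that the Radon–Nikodym derivative satisfies dP/dQ ≤ η almost everywhere, for some η > 1. Then ∫ |log₂(dP/dQ)|^a dP ≤ 2·max( 2, η·(log₂ η)^a/(η−1) )·‖P − Q‖_TV. -/
/-!
Write `g = dP/dQ` and `a = (2 + δ)/(1 + δ) ∈ [1, 2]`. Changing measure, the left side is
`∫ g |log₂ g|^a dQ`, and on `[0, η]` one has `t |log₂ t|^a ≤ M |t - 1|` with `M` the stated maximum: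
for `t ≤ 1` with constant `2`, because `s^a ≤ 2 (2^s - 1)` at `s = -log₂ t`; for `1 < t ≤ η` with
constant `η (log₂ η)^a / (η - 1)`, because both the secant slope `t log t / (t - 1)` of the convex
function `x log x` and `log₂ t` increase in `t`. Finally `∫ |g - 1| dQ = 2 (P B - Q B)` for
`B = {g ≥ 1}`, which is at most `2 ‖P - Q‖_TV`.
-/

open MeasureTheory

noncomputable section

noncomputable def tvDist {α : Type*} [MeasurableSpace α] (μ ν : Measure α) : ℝ :=
  sSup {r : ℝ | ∃ B : Set α, MeasurableSet B ∧ r = |(μ B).toReal - (ν B).toReal|}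

namespace Real

theorem cubic_le_two_rpow {s : ℝ} (hs : 0 ≤ s) :
    1 + log 2 * s + (log 2 * s) ^ 2 / 2 + (log 2 * s) ^ 3 / 6 ≤ 2 ^ s := by
  rw [rpow_def_of_pos two_pos]
  simpa [Finset.sum_range_succ, Nat.factorial] using
    sum_le_exp_of_nonneg (mul_nonneg (log_pos one_lt_two).le hs) 4

/-- With `c < log 2`, the cubic Taylor bound of `cubic_le_two_rpow` suffices because
`c³/3 s² + (c² - 1) s + 2c` has negative discriminant. -/
theorem sq_le_two_mul_two_rpow_sub_one {s : ℝ} (hs : 0 ≤ s) : s ^ 2 ≤ 2 * (2 ^ s - 1) := by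
  set c : ℝ := 0.6931471803
  have hc : c ≤ log 2 := log_two_gt_d9.le
  have hquad : 0 ≤ c ^ 3 / 3 * s ^ 2 + (c ^ 2 - 1) * s + 2 * c := by
    nlinarith [sq_nonneg (s - 2.4)]
  have hpoly : s ^ 2 ≤ 2 * (c * s) + (c * s) ^ 2 + (c * s) ^ 3 / 3 := by
    nlinarith [mul_nonneg hs hquad]
  have hmono : 2 * (c * s) + (c * s) ^ 2 + (c * s) ^ 3 / 3 ≤
      2 * (log 2 * s) + (log 2 * s) ^ 2 + (log 2 * s) ^ 3 / 3 := by
    have : 0 ≤ c * s := by positivity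
    gcongr
  linarith [cubic_le_two_rpow hs]

theorem rpow_le_two_mul_two_rpow_sub_one {a s : ℝ} (ha1 : 1 ≤ a) (ha2 : a ≤ 2) (hs : 0 ≤ s) :
    s ^ a ≤ 2 * (2 ^ s - 1) := by
  rcases le_total s 1 with hs1 | hs1
  · rcases hs.eq_or_lt with rfl | hs0
    · simp [zero_rpow (by linarith : a ≠ 0)]
    calc s ^ a ≤ s ^ (1 : ℝ) := rpow_le_rpow_of_exponent_ge hs0 hs1 ha1
      _ ≤ 2 * (2 ^ s - 1) := by
        have hexp : log 2 * s + 1 ≤ 2 ^ s := by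
          rw [rpow_def_of_pos two_pos]; exact add_one_le_exp _
        rw [rpow_one]; nlinarith [log_two_gt_d9]
  · calc s ^ a ≤ s ^ (2 : ℝ) := rpow_le_rpow_of_exponent_le hs1 ha2
      _ ≤ 2 * (2 ^ s - 1) := mod_cast sq_le_two_mul_two_rpow_sub_one hs

theorem mul_abs_logb_rpow_le_of_le_one {a t : ℝ} (ha1 : 1 ≤ a) (ha2 : a ≤ 2) (ht0 : 0 ≤ t)
    (ht1 : t ≤ 1) : t * |logb 2 t| ^ a ≤ 2 * (1 - t) := by
  rcases ht0.eq_or_lt with rfl | ht0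
  · simp
  have hs : |logb 2 t| = -logb 2 t := abs_of_nonpos (logb_nonpos one_lt_two ht0.le ht1)
  have h2s : (2 : ℝ) ^ (-logb 2 t) = t⁻¹ := by
    rw [rpow_neg zero_le_two, rpow_logb two_pos (by norm_num) ht0]
  calc t * |logb 2 t| ^ a ≤ t * (2 * ((2 : ℝ) ^ (-logb 2 t) - 1)) := by
        rw [hs]
        gcongr
        exact rpow_le_two_mul_two_rpow_sub_one ha1 ha2 (hs ▸ abs_nonneg _)
    _ = 2 * (1 - t) := by rw [h2s]; field_simp

theorem mul_logb_rpow_div_sub_one_le {a t η : ℝ} (ha1 : 1 ≤ a) (ht1 : 1 < t) (htη : t ≤ η) :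
    t * logb 2 t ^ a / (t - 1) ≤ η * logb 2 η ^ a / (η - 1) := by
  have hfactor : ∀ u : ℝ, 1 < u →
      u * logb 2 u ^ a / (u - 1) = u * log u / (u - 1) * (logb 2 u ^ (a - 1) / log 2) := by
    intro u hu
    have hlog : log u = logb 2 u * log 2 := by rw [← log_div_log]; field_simp
    have hlogb : logb 2 u ≠ 0 := (logb_pos one_lt_two hu).ne'
    rw [rpow_sub_one hlogb, hlog]
    field_simp
  have hsec := convexOn_mul_log.secant_mono (a := 1) (by simp) (by simp; linarith)
    (by simp; linarith) ht1.ne' (by linarith) htη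
  simp only [log_one, mul_zero, sub_zero] at hsec
  rw [hfactor t ht1, hfactor η (ht1.trans_le htη)]
  have hlogt : 0 < logb 2 t := logb_pos one_lt_two ht1
  gcongr
  · exact div_nonneg (mul_nonneg (by linarith) (log_nonneg (by linarith))) (by linarith)
  · exact one_lt_two

theorem mul_abs_logb_rpow_le {a t η : ℝ} (ha1 : 1 ≤ a) (ha2 : a ≤ 2) (ht0 : 0 ≤ t) (htη : t ≤ η) :
    t * |logb 2 t| ^ a ≤ max 2 (η * logb 2 η ^ a / (η - 1)) * |t - 1| := by
  rcases le_or_gt t 1 with ht1 | ht1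
  · rw [abs_of_nonpos (sub_nonpos.mpr ht1)]
    calc t * |logb 2 t| ^ a ≤ 2 * (1 - t) := mul_abs_logb_rpow_le_of_le_one ha1 ha2 ht0 ht1
      _ ≤ max 2 (η * logb 2 η ^ a / (η - 1)) * -(t - 1) := by
        rw [neg_sub]; gcongr; exact le_max_left _ _
  · rw [abs_of_pos (logb_pos one_lt_two ht1), abs_of_pos (sub_pos.mpr ht1),
      ← div_le_iff₀ (sub_pos.mpr ht1)]
    exact (mul_logb_rpow_div_sub_one_le ha1 ht1 htη).trans (le_max_right _ _)

end Real

theorem abs_measureReal_sub_le_tvDist {α : Type*} [MeasurableSpace α] (μ ν : Measure α)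
    [IsFiniteMeasure μ] [IsFiniteMeasure ν] {s : Set α} (hs : MeasurableSet s) :
    |μ.real s - ν.real s| ≤ tvDist μ ν := by
  refine le_csSup ⟨μ.real Set.univ + ν.real Set.univ, ?_⟩ ⟨s, hs, rfl⟩
  rintro r ⟨t, -, rfl⟩
  change |μ.real t - ν.real t| ≤ _
  have hμ : μ.real t ≤ μ.real Set.univ := measureReal_mono (Set.subset_univ t)
  have hν : ν.real t ≤ ν.real Set.univ := measureReal_mono (Set.subset_univ t)
  rw [abs_sub_le_iff]
  constructor <;> linarith [measureReal_nonneg (μ := μ) (s := t),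
    measureReal_nonneg (μ := ν) (s := t)]

theorem setIntegral_toReal_rnDeriv_sub_one {α : Type*} [MeasurableSpace α] {μ ν : Measure α}
    [IsFiniteMeasure μ] [IsFiniteMeasure ν] (hμν : μ ≪ ν) (s : Set α) :
    ∫ x in s, ((μ.rnDeriv ν x).toReal - 1) ∂ν = μ.real s - ν.real s := by
  rw [integral_sub Measure.integrable_toReal_rnDeriv.integrableOn (integrable_const 1),
    Measure.setIntegral_toReal_rnDeriv hμν, setIntegral_const, smul_eq_mul, mul_one]

theorem integral_abs_toReal_rnDeriv_sub_one_le_tvDist {α : Type*} [MeasurableSpace α]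
    {μ ν : Measure α} [IsProbabilityMeasure μ] [IsProbabilityMeasure ν] (hμν : μ ≪ ν) :
    ∫ x, |(μ.rnDeriv ν x).toReal - 1| ∂ν ≤ 2 * tvDist μ ν := by
  set B := {x | 1 ≤ (μ.rnDeriv ν x).toReal}
  have hB : MeasurableSet B :=
    (Measure.measurable_rnDeriv μ ν).ennreal_toReal measurableSet_Ici
  have hint : Integrable (fun x => |(μ.rnDeriv ν x).toReal - 1|) ν :=
    (Measure.integrable_toReal_rnDeriv.sub (integrable_const 1)).abs
  calc ∫ x, |(μ.rnDeriv ν x).toReal - 1| ∂ν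
      = ∫ x in B, ((μ.rnDeriv ν x).toReal - 1) ∂ν
        - ∫ x in Bᶜ, ((μ.rnDeriv ν x).toReal - 1) ∂ν := by
        rw [← integral_add_compl hB hint, sub_eq_add_neg, ← integral_neg]
        congr 1
        · exact setIntegral_congr_fun hB fun x hx => abs_of_nonneg (sub_nonneg.mpr hx)
        · exact setIntegral_congr_fun hB.compl fun x hx => abs_of_neg (sub_neg.mpr (not_le.mp hx))
    _ = 2 * (μ.real B - ν.real B) := by
        rw [setIntegral_toReal_rnDeriv_sub_one hμν, setIntegral_toReal_rnDeriv_sub_one hμν,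
          probReal_compl_eq_one_sub hB, probReal_compl_eq_one_sub hB]
        ring
    _ ≤ 2 * tvDist μ ν := by
        gcongr
        exact (le_abs_self _).trans (abs_measureReal_sub_le_tvDist μ ν hB)

theorem integral_comp_toReal_rnDeriv_le_tvDist {α : Type*} [MeasurableSpace α]
    {μ ν : Measure α} [IsProbabilityMeasure μ] [IsProbabilityMeasure ν] (hμν : μ ≪ ν)
    {f : ℝ → ℝ} {S : Set ℝ} {M : ℝ} (hM : 0 ≤ M)
    (hS : ∀ᵐ x ∂ν, (μ.rnDeriv ν x).toReal ∈ S) (hf : ∀ t ∈ S, 0 ≤ f t ∧ t * f t ≤ M * |t - 1|) :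
    ∫ x, f (μ.rnDeriv ν x).toReal ∂μ ≤ 2 * M * tvDist μ ν := by
  rw [← integral_toReal_rnDeriv_mul hμν]
  calc ∫ x, (μ.rnDeriv ν x).toReal * f (μ.rnDeriv ν x).toReal ∂ν
      ≤ ∫ x, M * |(μ.rnDeriv ν x).toReal - 1| ∂ν := by
        refine integral_mono_of_nonneg ?_
          ((Measure.integrable_toReal_rnDeriv.sub (integrable_const 1)).abs.const_mul M) ?_
        · filter_upwards [hS] with x hx using mul_nonneg ENNReal.toReal_nonneg (hf _ hx).1
        · filter_upwards [hS] with x hx using (hf _ hx).2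
    _ ≤ 2 * M * tvDist μ ν := by
        rw [integral_const_mul, mul_comm 2 M, mul_assoc]
        gcongr
        exact integral_abs_toReal_rnDeriv_sub_one_le_tvDist hμν

/-- **Key inequality in the proof of Lemma 1: a Kullback–Leibler-type moment is controlled by
the total variation distance.** -/
theorem log_moment_le_tvDist
    {α : Type} [MeasurableSpace α] (P Q : Measure α)
    [IsProbabilityMeasure P] [IsProbabilityMeasure Q]
    (habs : P ≪ Q ∧ Q ≪ P)
    (δ η : ℝ) (hδ : δ ∈ Set.Ioc (0:ℝ) 1) (hη : 1 < η)
    (hbound : ∀ᵐ x ∂Q, P.rnDeriv Q x ≤ ENNReal.ofReal η) :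
    ∫ x, |Real.logb 2 ((P.rnDeriv Q x).toReal)| ^ ((2 + δ) / (1 + δ)) ∂P ≤
      2 * max 2 (η * (Real.logb 2 η) ^ ((2 + δ) / (1 + δ)) / (η - 1)) * tvDist P Q := by
  obtain ⟨hδ0, -⟩ := hδ
  have ha1 : 1 ≤ (2 + δ) / (1 + δ) := by rw [le_div_iff₀ (by linarith)]; linarith
  have ha2 : (2 + δ) / (1 + δ) ≤ 2 := by rw [div_le_iff₀ (by linarith)]; linarith
  refine integral_comp_toReal_rnDeriv_le_tvDist habs.1 (S := Set.Icc 0 η)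
    (zero_le_two.trans (le_max_left _ _)) ?_
    fun t ht => ⟨by positivity, Real.mul_abs_logb_rpow_le ha1 ha2 ht.1 ht.2⟩
  filter_upwards [hbound] with x hx
    using ⟨ENNReal.toReal_nonneg, ENNReal.toReal_le_of_le_ofReal (by linarith) hx⟩
end
end

section
/- Let A be a finite set with |A| = l, let m < n, and let P̃ be an m-Markov probability measure on A^n, i.e., P̃(x_{1:n}) = P̃(x_{1:m})·Π_{j=m+1}^n P̃(x_j | x_{j−1},…,x_{j−m}). Enumerate A^{m+1} as a_1^{m},…,a_{l^{m+1}}^{m} and let Q_j = P̃(last coordinate of a_j^m | first m coordinates of a_j^m). For x ∈ A^n define the empirical block frequencies f_j(x) = (Σ_{k=m+1}^n 1{x_{k−m:k} = a_j^m})/(n−m), and the type class T_x = { z ∈ A^n : z_{1:m} = x_{1:m} and f_j(z) = f_j(x) for all j }. Then for every x ∈ A^n with all Q_j appearing in x positive: |T_x| ≤ 2^{ −(n−m)·Σ_{j=1}^{l^{m+1}} f_j(x)·log₂ Q_j }. -/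
noncomputable section

/-- Extend a string of length `n` to `ℕ → A` (by `default` beyond `n`). -/
def extArr {A : Type*} [Inhabited A] {n : ℕ} (z : Fin n → A) : ℕ → A :=
  fun k => if h : k < n then z ⟨k, h⟩ else default

/-- The `(m+1)`-block of `y` ending at position `k`: the preceding `m` symbols and `y k`. -/
def blockAt {A : Type*} (y : ℕ → A) (m k : ℕ) : (Fin m → A) × A :=
  (fun i : Fin m => y (k - m + i), y k)

/-- The number of occurrences of the block `b` at positions `m ≤ k < n`. -/
def blockFreq {A : Type*} [DecidableEq A] (y : ℕ → A) (m n : ℕ) (b : (Fin m → A) × A) : ℕ :=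
  ((Finset.Ico m n).filter fun k => blockAt y m k = b).card

/-- The type class of `x ∈ A^n`: strings with the same first `m` symbols and the same
`(m+1)`-block frequencies. -/
def typeClass {A : Type*} [Inhabited A] [DecidableEq A] (m n : ℕ) (x : Fin n → A) :
    Set (Fin n → A) :=
  {z | (∀ i : Fin n, (i : ℕ) < m → z i = x i) ∧
    ∀ b : (Fin m → A) × A, blockFreq (extArr z) m n b = blockFreq (extArr x) m n b}

/-!
Conditioned on its first `m` symbols, the `m`-Markov chain gives `z ∈ A^n` the weight
`∏_{k=m}^{n-1} Q(z_{k-m:k}) = ∏_b Q_b ^ N_b(z)`, where `N_b(z)` counts the occurrences of the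
block `b`; these weights sum to `1` over the strings with a given prefix. All strings of `T_x`
share the weight `p = ∏_b Q_b ^ N_b(x) = 2 ^ (∑_b N_b(x) log Q_b)`, which is positive because
every block occurring in `x` has positive probability, so `|T_x| p ≤ 1`.
-/

open Finset

lemma Real.rpow_sum_natCast_mul_logb {ι : Type*} (s : Finset ι) {b : ℝ} (hb : 0 < b)
    (hb1 : b ≠ 1) (c : ι → ℕ) (q : ι → ℝ) (hq : ∀ i ∈ s, c i ≠ 0 → 0 < q i) :
    b ^ (∑ i ∈ s, (c i : ℝ) * Real.logb b (q i)) = ∏ i ∈ s, q i ^ c i := by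
  rw [Real.rpow_sum_of_pos hb]
  refine prod_congr rfl fun i hi ↦ ?_
  rcases eq_or_ne (c i) 0 with hc | hc
  · simp [hc]
  · rw [mul_comm, Real.rpow_mul hb.le, Real.rpow_logb hb hb1 (hq i hi hc), Real.rpow_natCast]

section MarkovWeight

variable {A : Type*} [Inhabited A]

@[simp]
lemma extArr_coe {n : ℕ} (z : Fin n → A) (i : Fin n) : extArr z i = z i := by
  simp [extArr]

lemma extArr_snoc_of_lt {N : ℕ} (z : Fin N → A) (a : A) {k : ℕ} (hk : k < N) :
    extArr (Fin.snoc z a : Fin (N + 1) → A) k = extArr z k := by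
  simp [extArr, hk, Nat.lt_succ_of_lt hk, Fin.snoc]

lemma extArr_snoc_self {N : ℕ} (z : Fin N → A) (a : A) :
    extArr (Fin.snoc z a : Fin (N + 1) → A) N = a := by
  simp [extArr, Fin.snoc]

lemma blockAt_extArr_snoc_of_lt {m N k : ℕ} (z : Fin N → A) (a : A) (hmk : m ≤ k) (hk : k < N) :
    blockAt (extArr (Fin.snoc z a : Fin (N + 1) → A)) m k = blockAt (extArr z) m k := by
  simp only [blockAt, extArr_snoc_of_lt z a hk, Prod.mk.injEq, and_true]
  funext i
  exact extArr_snoc_of_lt z a (by omega)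

lemma blockAt_extArr_snoc_self {m N : ℕ} (z : Fin N → A) (a : A) (hm : m ≤ N) :
    blockAt (extArr (Fin.snoc z a : Fin (N + 1) → A)) m N = ((blockAt (extArr z) m N).1, a) := by
  simp only [blockAt, extArr_snoc_self, Prod.mk.injEq, and_true]
  funext i
  exact extArr_snoc_of_lt z a (by omega)

def markovWeight {m N : ℕ} (Qt : (Fin m → A) → A → ℝ) (z : Fin N → A) : ℝ :=
  ∏ k ∈ Ico m N, Function.uncurry Qt (blockAt (extArr z) m k)

variable {m : ℕ} (Qt : (Fin m → A) → A → ℝ)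

lemma markovWeight_snoc {N : ℕ} (hm : m ≤ N) (z : Fin N → A) (a : A) :
    markovWeight Qt (Fin.snoc z a : Fin (N + 1) → A) =
      markovWeight Qt z * Qt (blockAt (extArr z) m N).1 a := by
  rw [markovWeight, prod_Ico_succ_top hm, blockAt_extArr_snoc_self z a hm]
  congr 1
  exact prod_congr rfl fun k hk ↦ by
    rw [blockAt_extArr_snoc_of_lt z a (mem_Ico.1 hk).1 (mem_Ico.1 hk).2]

lemma markovWeight_eq_prod_pow_blockFreq [Fintype A] [DecidableEq A] {N : ℕ} (z : Fin N → A) :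
    markovWeight Qt z = ∏ b, Function.uncurry Qt b ^ blockFreq (extArr z) m N b := by
  rw [markovWeight, ← prod_fiberwise_of_maps_to' (t := univ) (fun _ _ ↦ mem_univ _)]
  exact prod_congr rfl fun b _ ↦ prod_const _

lemma sum_markovWeight [Fintype A] [DecidableEq A] (hQtsum : ∀ w, ∑ a, Qt w a = 1)
    (x : ℕ → A) {N : ℕ} (hN : m ≤ N) :
    ∑ z : Fin N → A with ∀ i : Fin N, (i : ℕ) < m → z i = x i, markovWeight Qt z = 1 := by
  induction N, hN using Nat.le_induction with
  | base =>
    have hprefix : ({z : Fin m → A | ∀ i : Fin m, (i : ℕ) < m → z i = x i} : Finset _) =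
        {fun i : Fin m ↦ x i} := by
      ext z
      simp [funext_iff]
    rw [hprefix, sum_singleton, markovWeight, Ico_self, prod_empty]
  | succ N hN ih =>
    have hprefix : ∀ (z : Fin N → A) (a : A),
        (∀ i : Fin (N + 1), (i : ℕ) < m → (Fin.snoc z a : Fin (N + 1) → A) i = x i) ↔
          ∀ i : Fin N, (i : ℕ) < m → z i = x i := by
      intro z a
      simp only [Fin.forall_fin_succ', Fin.val_castSucc, Fin.snoc_castSucc, Fin.val_last]
      exact and_iff_left fun h ↦ absurd h (by omega)
    rw [sum_filter, ← (Fin.snocEquiv fun _ ↦ A).sum_comp, Fintype.sum_prod_type, sum_comm,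
      ← ih, sum_filter]
    refine sum_congr rfl fun z _ ↦ ?_
    have hsnoc : ∀ a, (Fin.snocEquiv fun _ ↦ A) (a, z) = Fin.snoc z a := fun _ ↦ rfl
    simp only [hsnoc, hprefix, markovWeight_snoc Qt hN]
    split_ifs
    · rw [← mul_sum, hQtsum, mul_one]
    · exact sum_const_zero

lemma ncard_typeClass_mul_le_one [Fintype A] [DecidableEq A] {n : ℕ} (hmn : m ≤ n)
    (hQt : ∀ w a, 0 ≤ Qt w a) (hQtsum : ∀ w, ∑ a, Qt w a = 1) (x : Fin n → A) :
    (typeClass m n x).ncard * ∏ b, Function.uncurry Qt b ^ blockFreq (extArr x) m n b ≤ 1 := by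
  classical
  rw [Set.ncard_eq_toFinset_card', ← sum_markovWeight Qt hQtsum (extArr x) hmn]
  calc ((typeClass m n x).toFinset.card : ℝ) *
        ∏ b, Function.uncurry Qt b ^ blockFreq (extArr x) m n b
      = ∑ z ∈ (typeClass m n x).toFinset, markovWeight Qt z := by
        rw [← nsmul_eq_mul, ← sum_const]
        refine sum_congr rfl fun z hz ↦ ?_
        simp only [markovWeight_eq_prod_pow_blockFreq, (Set.mem_toFinset.1 hz).2]
    _ ≤ ∑ z : Fin n → A with ∀ i : Fin n, (i : ℕ) < m → z i = extArr x i, markovWeight Qt z := by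
        refine sum_le_sum_of_subset_of_nonneg (fun z hz ↦ ?_) fun z _ _ ↦
          prod_nonneg fun _ _ ↦ hQt _ _
        simpa using (Set.mem_toFinset.1 hz).1

end MarkovWeight

lemma pos_of_blockFreq_ne_zero {A : Type*} [DecidableEq A] {m n : ℕ} {y : ℕ → A}
    (Q : (Fin m → A) × A → ℝ) (hpos : ∀ k ∈ Ico m n, 0 < Q (blockAt y m k))
    {b : (Fin m → A) × A} (hb : blockFreq y m n b ≠ 0) : 0 < Q b := by
  obtain ⟨k, hk⟩ := card_ne_zero.1 hb
  obtain ⟨hk, hkb⟩ := mem_filter.1 hk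
  exact hkb ▸ hpos k hk

theorem typeClass_card_le_general
    {A : Type} [Fintype A] [Inhabited A] [DecidableEq A]
    (m n : ℕ) (hmn : m < n)
    -- the m-Markov measure P̃ on A^n: initial distribution P0 and transition probabilities Qt
    (Qt : (Fin m → A) → A → ℝ)
    (hQt : ∀ w a, 0 ≤ Qt w a) (hQtsum : ∀ w : Fin m → A, ∑ a : A, Qt w a = 1)
    (x : Fin n → A)
    -- all transition probabilities appearing in x are positive
    (hpos : ∀ k ∈ Finset.Ico m n,
      0 < Qt (fun i : Fin m => extArr x (k - m + i)) (extArr x k)) :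
    ((typeClass m n x).ncard : ℝ) ≤
      2 ^ (-(((n : ℝ) - m) *
        ∑ b : (Fin m → A) × A,
          ((blockFreq (extArr x) m n b : ℝ) / ((n : ℝ) - m)) * Real.logb 2 (Qt b.1 b.2))) := by
  have hQpos : ∀ b ∈ univ, blockFreq (extArr x) m n b ≠ 0 → 0 < Qt b.1 b.2 :=
    fun _ _ ↦ pos_of_blockFreq_ne_zero (Function.uncurry Qt) hpos
  have hnm : (n : ℝ) - m ≠ 0 := sub_ne_zero.2 (by exact_mod_cast hmn.ne')
  have hexp : ((n : ℝ) - m) * ∑ b : (Fin m → A) × A,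
      ((blockFreq (extArr x) m n b : ℝ) / ((n : ℝ) - m)) * Real.logb 2 (Qt b.1 b.2) =
      ∑ b : (Fin m → A) × A, (blockFreq (extArr x) m n b : ℝ) * Real.logb 2 (Qt b.1 b.2) := by
    rw [mul_sum]
    exact sum_congr rfl fun b _ ↦ by field_simp
  have hweight := Real.rpow_sum_natCast_mul_logb univ two_pos (by norm_num) _ _ hQpos
  have hp : 0 < ∏ b : (Fin m → A) × A, Qt b.1 b.2 ^ blockFreq (extArr x) m n b :=
    hweight ▸ by positivity
  rw [hexp, Real.rpow_neg zero_le_two, hweight, ← one_div]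
  exact (le_div_iff₀ hp).2 (ncard_typeClass_mul_le_one Qt hmn.le hQt hQtsum x)

/-- **The counting bound for type classes of an `m`-Markov measure.** -/
theorem typeClass_card_le
    {A : Type} [Fintype A] [Inhabited A] [DecidableEq A]
    (m n : ℕ) (hmn : m < n)
    -- the m-Markov measure P̃ on A^n: initial distribution P0 and transition probabilities Qt
    (P0 : (Fin m → A) → ℝ) (Qt : (Fin m → A) → A → ℝ)
    (hP0 : ∀ w, 0 ≤ P0 w) (hP0sum : ∑ w : Fin m → A, P0 w = 1)
    (hQt : ∀ w a, 0 ≤ Qt w a) (hQtsum : ∀ w : Fin m → A, ∑ a : A, Qt w a = 1)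
    (x : Fin n → A)
    -- all transition probabilities appearing in x are positive
    (hpos : ∀ k ∈ Finset.Ico m n,
      0 < Qt (fun i : Fin m => extArr x (k - m + i)) (extArr x k)) :
    ((typeClass m n x).ncard : ℝ) ≤
      2 ^ (-(((n : ℝ) - m) *
        ∑ b : (Fin m → A) × A,
          ((blockFreq (extArr x) m n b : ℝ) / ((n : ℝ) - m)) * Real.logb 2 (Qt b.1 b.2))) :=
  typeClass_card_le_general m n hmn Qt hQt hQtsum x hpos
end
end
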